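/- arXiv:1902.03675 — 3 statements merged into one kernel-verified Lean document; each statement's English description precedes it below -/
import Mathlib

section
/- Let k be a nonnegative integer and R > 0. Suppose f : [0,R) → ℝ is such that the function F defined on the open ball B_R = {x ∈ ℝ³ : |x| < R} by F(x) = f(|x|) is of class C^{k+2}. Then f is of class C^{k+2} on [0,R), its first derivative satisfies f'(0) = 0, and the function h defined by h(r) = (1/r) f'(r) for 0 < r < R and h(0) = f''(0) is of class C^k on [0,R). -/
/-!
Restricting `F = f ∘ ‖·‖` to a line through the origin shows that the even function
`t ↦ f |t|` is `C^{k+2}` on `(-R, R)`; it agrees with `f` on `[0, R)`, and evenness forces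
`f'(0) = 0`. The point is that `h(r) = D²F(r u)(v, v)` for orthonormal `u, v`: along the line
`s ↦ r u + s v` we have `F = f (√(r² + s²))`, whose derivative is `s · f'(ρ) / ρ` with
`ρ = √(r² + s²)`, so its second derivative at `s = 0` is `f'(r) / r` when `r > 0`, and `f''(0)`
when `r = 0`. Since `D²F` is `C^k`, so is `h`.
-/

open Set Metric Filter Topology
open scoped ContDiff

theorem hasDerivAt_zero_of_eventuallyEq_mul {ψ a : ℝ → ℝ} (ha : ContinuousAt a 0)
    (hψ : ψ =ᶠ[𝓝 0] fun s => s * a s) : HasDerivAt ψ (a 0) 0 := by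
  refine HasDerivAt.congr_of_eventuallyEq ?_ hψ
  rw [hasDerivAt_iff_tendsto_slope]
  refine (ha.tendsto.mono_left nhdsWithin_le_nhds).congr' ?_
  filter_upwards [self_mem_nhdsWithin] with s hs
  simp [slope_def_field, mul_div_cancel_left₀ _ (show s ≠ 0 from hs)]

theorem derivWithin_Ico_eq_of_eqOn {f g : ℝ → ℝ} {g' a b r : ℝ} (hfg : EqOn f g (Ico a b))
    (hr : r ∈ Ico a b) (hg : HasDerivAt g g' r) : derivWithin f (Ico a b) r = g' := by
  rw [derivWithin_congr hfg (hfg hr), hg.hasDerivWithinAt.derivWithin (uniqueDiffOn_Ico a b r hr)]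

theorem deriv_comp_abs_zero (f : ℝ → ℝ) : deriv (fun t => f |t|) 0 = 0 := by
  have h := deriv_comp_neg (fun t => f |t|) 0
  simp only [abs_neg, neg_zero] at h
  linarith

theorem ContDiffAt.eventually_differentiableAt {𝕜 E G : Type*} [NontriviallyNormedField 𝕜]
    [NormedAddCommGroup E] [NormedSpace 𝕜 E] [NormedAddCommGroup G] [NormedSpace 𝕜 G]
    {F : E → G} {x : E} {n : WithTop ℕ∞} (hF : ContDiffAt 𝕜 n F x) (hn : n ≠ 0) (hn' : n ≠ ∞) :
    ∀ᶠ y in 𝓝 x, DifferentiableAt 𝕜 F y :=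
  (hF.eventually hn').mono fun _ hy => hy.differentiableAt hn

section NormedSpace

variable {E G : Type*} [NormedAddCommGroup E] [NormedSpace ℝ E] [NormedAddCommGroup G]
  [NormedSpace ℝ G]

theorem ContDiffAt.hasDerivAt_deriv_comp_add_smul {F : E → G} {x : E} (hF : ContDiffAt ℝ 2 F x)
    (v : E) : HasDerivAt (deriv fun s : ℝ => F (x + s • v)) (fderiv ℝ (fderiv ℝ F) x v v) 0 := by
  have hline : HasDerivAt (fun s : ℝ => x + s • v) v 0 := by
    simpa using ((hasDerivAt_id (0 : ℝ)).smul_const v).const_add x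
  have hdiff : ∀ᶠ s in 𝓝 (0 : ℝ), DifferentiableAt ℝ F (x + s • v) := by
    have h := hline.continuousAt.tendsto
    rw [zero_smul, add_zero] at h
    exact h.eventually (hF.eventually_differentiableAt two_ne_zero (by simp))
  have hD2 : HasFDerivAt (fderiv ℝ F) (fderiv ℝ (fderiv ℝ F) x) x :=
    ((hF.fderiv_right (m := 1) (by norm_num)).differentiableAt one_ne_zero).hasFDerivAt
  refine ((ContinuousLinearMap.apply ℝ G v).hasFDerivAt.comp_hasDerivAt 0
    (hD2.comp_hasDerivAt_of_eq 0 hline (by simp))).congr_of_eventuallyEq ?_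
  filter_upwards [hdiff] with s hs
  simpa using hs.deriv_comp_add_smul

theorem ContDiffOn.contDiffOn_fderiv_fderiv_apply_smul {F : E → G} {s : Set E}
    {n : WithTop ℕ∞} (hF : ContDiffOn ℝ (n + 2) F s) (hs : IsOpen s) {I : Set ℝ} {u : E}
    (hmaps : MapsTo (fun r : ℝ => r • u) I s) (v w : E) :
    ContDiffOn ℝ n (fun r : ℝ => fderiv ℝ (fderiv ℝ F) (r • u) v w) I := by
  have hD2 : ContDiffOn ℝ n (fderiv ℝ (fderiv ℝ F)) s :=
    (hF.fderiv_of_isOpen hs (m := n + 1) (by rw [add_assoc]; norm_num)).fderiv_of_isOpen hs le_rfl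
  exact ((hD2.comp (contDiff_id.smul contDiff_const).contDiffOn hmaps).clm_apply
    contDiffOn_const).clm_apply contDiffOn_const

variable {f : ℝ → ℝ} {u v : E} {R : ℝ}

theorem mapsTo_smul_Ioo_ball (hu : ‖u‖ = 1) (R : ℝ) :
    MapsTo (fun t : ℝ => t • u) (Ioo (-R) R) (ball 0 R) := fun t ht => by
  simpa [norm_smul, hu, abs_lt] using ht

theorem contDiffOn_comp_abs_of_contDiffOn_comp_norm (hu : ‖u‖ = 1) {n : WithTop ℕ∞}
    (hF : ContDiffOn ℝ n (fun x : E => f ‖x‖) (ball 0 R)) :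
    ContDiffOn ℝ n (fun t => f |t|) (Ioo (-R) R) := by
  refine (hF.comp (contDiff_id.smul contDiff_const).contDiffOn
    (mapsTo_smul_Ioo_ball hu R)).congr fun t _ => ?_
  simp [norm_smul, hu]

theorem derivWithin_Ico_eqOn_deriv_comp_abs (hu : ‖u‖ = 1)
    (hF : ContDiffOn ℝ 1 (fun x : E => f ‖x‖) (ball 0 R)) :
    EqOn (derivWithin f (Ico 0 R)) (deriv fun t => f |t|) (Ico 0 R) := fun r hr =>
  have hr' : r ∈ Ioo (-R) R := ⟨by linarith [hr.1, hr.2], hr.2⟩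
  derivWithin_Ico_eq_of_eqOn (fun s hs => by simp [abs_of_nonneg hs.1]) hr
    ((((contDiffOn_comp_abs_of_contDiffOn_comp_norm hu hF).differentiableOn one_ne_zero r hr')
      |>.differentiableAt (isOpen_Ioo.mem_nhds hr')).hasDerivAt)

theorem hasDerivAt_deriv_comp_abs_zero (hv : ‖v‖ = 1)
    (hF : ContDiffAt ℝ 2 (fun x : E => f ‖x‖) 0) :
    HasDerivAt (deriv fun t => f |t|) (fderiv ℝ (fderiv ℝ fun x : E => f ‖x‖) 0 v v) 0 := by
  simpa only [zero_add, norm_smul, hv, mul_one, Real.norm_eq_abs] using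
    hF.hasDerivAt_deriv_comp_add_smul v

end NormedSpace

section InnerProductSpace

variable {E : Type*} [NormedAddCommGroup E] [InnerProductSpace ℝ E] {f : ℝ → ℝ} {u v : E}

theorem norm_smul_add_smul_of_inner_eq_zero (hu : ‖u‖ = 1) (hv : ‖v‖ = 1)
    (huv : inner ℝ u v = 0) (t s : ℝ) : ‖t • u + s • v‖ = √(t ^ 2 + s ^ 2) := by
  have h := norm_add_sq_eq_norm_sq_add_norm_sq_real (x := t • u) (y := s • v)
    (by simp [inner_smul_left, inner_smul_right, huv])
  rw [← Real.sqrt_sq (norm_nonneg _), sq, h]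
  simp [norm_smul, hu, hv, ← sq]

theorem fderiv_fderiv_norm_comp_of_pos (hu : ‖u‖ = 1) (hv : ‖v‖ = 1)
    (huv : inner ℝ u v = 0) {t : ℝ} (ht : 0 < t)
    (hF : ContDiffAt ℝ 2 (fun x : E => f ‖x‖) (t • u)) :
    fderiv ℝ (fderiv ℝ fun x : E => f ‖x‖) (t • u) v v = deriv f t / t := by
  set ρ : ℝ → ℝ := fun s => √(t ^ 2 + s ^ 2)
  have hρ0 : ρ 0 = t := by simp [ρ, Real.sqrt_sq ht.le]
  have hρ_pos : ∀ s, 0 < ρ s := fun s => Real.sqrt_pos.2 (by positivity)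
  have hρ_cont : ContinuousAt ρ 0 := by fun_prop
  have hρ : ∀ s, HasDerivAt ρ (s / ρ s) s := fun s => by
    convert ((hasDerivAt_pow 2 s).const_add (t ^ 2)).sqrt (by positivity) using 1
    simp only [ρ, Nat.cast_ofNat, Nat.add_one_sub_one, pow_one]
    field_simp
  have hf : ContDiffAt ℝ 2 f t := by
    have hfu : (fun r : ℝ => f ‖r • u‖) =ᶠ[𝓝 t] f :=
      (eventually_gt_nhds ht).mono fun r hr => by simp [norm_smul, hu, abs_of_pos hr]
    exact (hF.comp t (contDiffAt_id.smul contDiffAt_const) :).congr_of_eventuallyEq hfu.symm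
  have hdiff : ∀ᶠ s in 𝓝 (0 : ℝ), DifferentiableAt ℝ f (ρ s) := by
    have h := hρ_cont.tendsto
    rw [hρ0] at h
    exact h.eventually (hf.eventually_differentiableAt two_ne_zero (by simp))
  have hψ : (deriv fun s : ℝ => f ‖t • u + s • v‖) =ᶠ[𝓝 0]
      fun s => s * (deriv f (ρ s) / ρ s) := by
    filter_upwards [hdiff] with s hs
    simp only [norm_smul_add_smul_of_inner_eq_zero hu hv huv]
    change deriv (f ∘ ρ) s = _
    rw [(hs.hasDerivAt.comp s (hρ s)).deriv]
    field_simp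
  have ha : ContinuousAt (fun s => deriv f (ρ s) / ρ s) 0 := by
    have hf' : ContinuousAt (deriv f) (ρ 0) := by
      rw [hρ0]
      exact (hf.continuousAt_fderiv two_ne_zero).clm_apply continuousAt_const
    exact (hf'.comp hρ_cont).div hρ_cont (hρ_pos 0).ne'
  simpa [hρ0] using (hF.hasDerivAt_deriv_comp_add_smul v).unique
    (hasDerivAt_zero_of_eventuallyEq_mul ha hψ)

theorem eqOn_derivWithin_div_self_fderiv_fderiv (hu : ‖u‖ = 1) (hv : ‖v‖ = 1)
    (huv : inner ℝ u v = 0) {R : ℝ} (hF : ContDiffOn ℝ 2 (fun x : E => f ‖x‖) (ball 0 R)) :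
    EqOn (fun r => if r = 0
        then derivWithin (derivWithin f (Ico 0 R)) (Ico 0 R) 0
        else derivWithin f (Ico 0 R) r / r)
      (fun r => fderiv ℝ (fderiv ℝ fun x : E => f ‖x‖) (r • u) v v) (Ico 0 R) := by
  intro r hr
  have hF2 : ContDiffAt ℝ 2 (fun x : E => f ‖x‖) (r • u) := hF.contDiffAt
    (isOpen_ball.mem_nhds (mapsTo_smul_Ioo_ball hu R ⟨by linarith [hr.1, hr.2], hr.2⟩))
  dsimp only
  rcases hr.1.eq_or_lt with rfl | hr0
  · rw [if_pos rfl, zero_smul]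
    rw [zero_smul] at hF2
    exact derivWithin_Ico_eq_of_eqOn (derivWithin_Ico_eqOn_deriv_comp_abs hu (hF.of_le one_le_two))
      hr (hasDerivAt_deriv_comp_abs_zero hv hF2)
  · rw [if_neg hr0.ne', derivWithin_of_mem_nhds (Ico_mem_nhds hr0 hr.2),
      fderiv_fderiv_norm_comp_of_pos hu hv huv hr0 hF2]

end InnerProductSpace

/-- If the spherically symmetric function `F(x) = f(|x|)` on the ball
`B_R ⊆ ℝ³` is of class `C^{k+2}`, then `f ∈ C^{k+2}([0,R))`, `f'(0) = 0`, and the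
function `h` with `h(r) = f'(r)/r` for `r ≠ 0` and `h(0) = f''(0)` is of class
`C^k([0,R))`. -/
theorem stmt0 (k : ℕ) (R : ℝ) (hR : 0 < R) (f : ℝ → ℝ)
    (hF : ContDiffOn ℝ ((k : ℕ∞) + 2)
      (fun x : EuclideanSpace ℝ (Fin 3) => f ‖x‖) (Metric.ball 0 R)) :
    ContDiffOn ℝ ((k : ℕ∞) + 2) f (Set.Ico 0 R) ∧
    derivWithin f (Set.Ico 0 R) 0 = 0 ∧
    ContDiffOn ℝ (k : ℕ∞)
      (fun r => if r = 0
        then derivWithin (derivWithin f (Set.Ico 0 R)) (Set.Ico 0 R) 0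
        else derivWithin f (Set.Ico 0 R) r / r)
      (Set.Ico 0 R) := by
  set u : EuclideanSpace ℝ (Fin 3) := EuclideanSpace.single 0 1
  set v : EuclideanSpace ℝ (Fin 3) := EuclideanSpace.single 1 1
  have hu : ‖u‖ = 1 := by simp [u]
  have hv : ‖v‖ = 1 := by simp [v]
  have huv : inner ℝ u v = 0 := by simp [u, v, EuclideanSpace.inner_single_left]
  have hsub : Ico 0 R ⊆ Ioo (-R) R := fun r hr => ⟨by linarith [hr.1], hr.2⟩
  have hF2 : ContDiffOn ℝ 2 (fun x : EuclideanSpace ℝ (Fin 3) => f ‖x‖) (ball 0 R) :=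
    hF.of_le le_add_self
  refine ⟨?_, ?_, ?_⟩
  · exact ((contDiffOn_comp_abs_of_contDiffOn_comp_norm hu hF).mono hsub).congr
      fun r hr => by simp [abs_of_nonneg hr.1]
  · rw [derivWithin_Ico_eqOn_deriv_comp_abs hu (hF2.of_le one_le_two) ⟨le_rfl, hR⟩,
      deriv_comp_abs_zero]
  · exact ((hF.contDiffOn_fderiv_fderiv_apply_smul isOpen_ball (mapsTo_smul_Ioo_ball hu R)
      v v).mono hsub).congr (eqOn_derivWithin_div_self_fderiv_fderiv hu hv huv hF2)
end

section
/- Let G > 0, γ > 0, R > 0. Let ρ ∈ C¹([0,R]) with ρ > 0 on [0,R) and ρ(R) = 0, let g(r) := (4πG/r²) ∫₀^r ρ(s) s² ds, and let P be differentiable and positive on (0,R) with P' = −ρ g. Take l = 1 and V^r = V^h = 1, and define 𝒜 := ρ'/ρ − P'/(γP), δρ̌ := −r⁻²(d/dr)(r² ρ V^r) + 2 ρ V^h / r (extended by 0 for r ≥ R), δP̌ := (γP/ρ) δρ̌ + γ 𝒜 P V^r, and δΦ̌ := −4πG 𝓗₁(δρ̌). Then on (0,R): δρ̌ = −ρ',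 δP̌ = −P', δΦ̌ = −g, and both components L₁^r := (1/ρ)(δP̌)' − (P'/ρ²) δρ̌ + (δΦ̌)' and L₁^h := (1/r)( δP̌/ρ + δΦ̌ ) vanish identically; that is, the constant pair (V^r, V^h) = (1,1) lies in the kernel of the linearized operator for degree l = 1. -/
/-
With `V^r = V^h = 1` the density perturbation collapses to `δρ̌ = −ρ'` on `(0,R)`, and then
`δP̌ = −P' = ρ g`. For the potential, `𝓗₁(−ρ')` splits into `∫_r^R ρ' r ds = −r ρ(r)` (using
`ρ(R) = 0`) and `r⁻² ∫₀^r ρ' s³ ds = ρ(r) r − 3 r⁻² ∫₀^r ρ s² ds` (integration by parts), so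
`δΦ̌ = −g`. The perturbation is thus the infinitesimal translation of the equilibrium, and both
components of the linearized operator cancel identically: the value of `g'` never matters.
-/

open Set Filter MeasureTheory

/-- The integral operator `𝓗_l`:
`(𝓗_l f)(r) = (2l+1)⁻¹ [ ∫_r^∞ f(s)(r/s)^l s ds + ∫₀^r f(s)(s/r)^{l+1} s ds ]`. -/
noncomputable def Hl (l : ℕ) (f : ℝ → ℝ) (r : ℝ) : ℝ :=
  (2 * (l : ℝ) + 1)⁻¹ *
    ((∫ s in Set.Ioi r, f s * (r / s) ^ l * s) +
      ∫ s in Set.Ioo (0 : ℝ) r, f s * (s / r) ^ (l + 1) * s)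

/-- The gravitational field `g(r) = (4πG/r²)∫₀^r ρ s² ds`. -/
noncomputable def gfield (G : ℝ) (ρ : ℝ → ℝ) (r : ℝ) : ℝ :=
  4 * Real.pi * G / r ^ 2 * ∫ s in Set.Ioo (0 : ℝ) r, ρ s * s ^ 2

/-- The Eulerian density perturbation for `l = 1`, `V^r = V^h = 1`:
`δρ̌ = −r⁻²(r²ρ)' + 2ρ/r`, extended by `0` outside `(0,R)`. -/
noncomputable def dRho1 (R : ℝ) (ρ : ℝ → ℝ) (r : ℝ) : ℝ :=
  if 0 < r ∧ r < R then
    -(r ^ 2)⁻¹ * deriv (fun s => s ^ 2 * ρ s) r + 2 * ρ r / r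
  else 0

/-- The Eulerian pressure perturbation `δP̌ = (γP/ρ)δρ̌ + γ𝒜P·V^r` with `V^r = 1` and
`𝒜 = ρ'/ρ − P'/(γP)`. -/
noncomputable def dP1 (R γ : ℝ) (ρ ρ' P : ℝ → ℝ) (r : ℝ) : ℝ :=
  γ * P r / ρ r * dRho1 R ρ r
    + γ * (ρ' r / ρ r - deriv P r / (γ * P r)) * P r

/-- The Eulerian potential perturbation `δΦ̌ = −4πG 𝓗₁(δρ̌)`. -/
noncomputable def dPhi1 (R G : ℝ) (ρ : ℝ → ℝ) (r : ℝ) : ℝ :=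
  -(4 * Real.pi * G) * Hl 1 (dRho1 R ρ) r

open Topology

lemma setIntegral_Ioo_eq_sub_of_hasDerivAt {f f' : ℝ → ℝ} {a b : ℝ} (hab : a ≤ b)
    (hcont : ContinuousOn f (Icc a b)) (hderiv : ∀ x ∈ Ioo a b, HasDerivAt f (f' x) x)
    (hint : IntegrableOn f' (Ioo a b)) :
    ∫ x in Ioo a b, f' x = f b - f a := by
  rw [← integral_Ioc_eq_integral_Ioo, ← intervalIntegral.integral_of_le hab]
  exact intervalIntegral.integral_eq_sub_of_hasDerivAt_of_le hab hcont hderiv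
    ((intervalIntegrable_iff_integrableOn_Ioo_of_le hab).2 hint)

lemma hasDerivAt_integral_Ioo_zero {f : ℝ → ℝ} {R r : ℝ} (hf : ContinuousOn f (Icc 0 R))
    (hr : r ∈ Ioo 0 R) :
    HasDerivAt (fun x => ∫ s in Ioo 0 x, f s) (f r) r := by
  have hnhds : Ioo 0 R ∈ 𝓝 r := isOpen_Ioo.mem_nhds hr
  have hfIoo : ContinuousOn f (Ioo 0 R) := hf.mono Ioo_subset_Icc_self
  have hFTC := intervalIntegral.integral_hasDerivAt_right
    ((hf.mono (Icc_subset_Icc le_rfl hr.2.le)).intervalIntegrable_of_Icc hr.1.le)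
    (hfIoo.stronglyMeasurableAtFilter isOpen_Ioo r hr) (hfIoo.continuousAt hnhds)
  refine hFTC.congr_of_eventuallyEq ?_
  filter_upwards [hnhds] with x hx
  rw [intervalIntegral.integral_of_le hx.1.le, integral_Ioc_eq_integral_Ioo]

lemma differentiableAt_gfield {G R r : ℝ} {ρ : ℝ → ℝ} (hρ : ContinuousOn ρ (Icc 0 R))
    (hr : r ∈ Ioo 0 R) : DifferentiableAt ℝ (gfield G ρ) r := by
  have hmass := hasDerivAt_integral_Ioo_zero (hρ.mul (continuousOn_pow 2)) hr
  unfold gfield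
  exact DifferentiableAt.mul (by fun_prop (disch := exact pow_ne_zero 2 hr.1.ne'))
    hmass.differentiableAt

lemma dRho1_eq_neg_deriv {R r : ℝ} {ρ : ℝ → ℝ} {c : ℝ} (hr : r ∈ Ioo 0 R)
    (hρ : HasDerivAt ρ c r) : dRho1 R ρ r = -c := by
  have hsq : HasDerivAt (fun t : ℝ => t ^ 2) (2 * r) r := by simpa using hasDerivAt_pow 2 r
  have hprod : HasDerivAt (fun s => s ^ 2 * ρ s) (2 * r * ρ r + r ^ 2 * c) r := hsq.mul hρ
  rw [dRho1, if_pos (mem_Ioo.1 hr), hprod.deriv]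
  field_simp [hr.1.ne']
  ring

lemma dRho1_eq_zero_of_le {R r : ℝ} {ρ : ℝ → ℝ} (hr : R ≤ r) : dRho1 R ρ r = 0 :=
  if_neg fun h => hr.not_gt h.2

lemma dP1_eq_neg_deriv {R γ r : ℝ} {ρ ρ' P : ℝ → ℝ} (hγ : γ ≠ 0) (hρ : ρ r ≠ 0) (hP : P r ≠ 0)
    (hδρ : dRho1 R ρ r = -ρ' r) : dP1 R γ ρ ρ' P r = -deriv P r := by
  rw [dP1, hδρ]
  field_simp
  ring

section Potential

variable {R r : ℝ} {ρ ρ' : ℝ → ℝ}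
  (hρd : ∀ s ∈ Ioo 0 R, HasDerivAt ρ (ρ' s) s)
  (hρc : ContinuousOn ρ (Icc 0 R)) (hρ'c : ContinuousOn ρ' (Icc 0 R))
include hρd hρc hρ'c

lemma integral_Ioi_dRho1_mul (hr : r ∈ Ioo 0 R) :
    ∫ s in Ioi r, dRho1 R ρ s * (r / s) ^ 1 * s = r * (ρ r - ρ R) := by
  have hsub : Icc r R ⊆ Icc 0 R := Icc_subset_Icc hr.1.le le_rfl
  have hcut : ∫ s in Ioi r, dRho1 R ρ s * (r / s) ^ 1 * s
      = ∫ s in Ioo r R, dRho1 R ρ s * (r / s) ^ 1 * s := by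
    refine setIntegral_eq_of_subset_of_forall_sdiff_eq_zero measurableSet_Ioi
      Ioo_subset_Ioi_self fun s hs => ?_
    have hRs : R ≤ s := not_lt.1 fun h => hs.2 ⟨hs.1, h⟩
    rw [dRho1_eq_zero_of_le hRs, zero_mul, zero_mul]
  have hintegrand : EqOn (fun s => dRho1 R ρ s * (r / s) ^ 1 * s) (fun s => -r * ρ' s)
      (Ioo r R) := fun s hs => by
    have hs' : s ∈ Ioo 0 R := ⟨hr.1.trans hs.1, hs.2⟩
    simp only [dRho1_eq_neg_deriv hs' (hρd s hs'), pow_one]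
    field_simp [hs'.1.ne']
  rw [hcut, setIntegral_congr_fun measurableSet_Ioo hintegrand, integral_const_mul,
    setIntegral_Ioo_eq_sub_of_hasDerivAt hr.2.le (hρc.mono hsub)
      (fun s hs => hρd s ⟨hr.1.trans hs.1, hs.2⟩)
      ((hρ'c.mono hsub).integrableOn_Icc.mono_set Ioo_subset_Icc_self)]
  ring

lemma integral_Ioo_dRho1_mul (hr : r ∈ Ioo 0 R) :
    ∫ s in Ioo 0 r, dRho1 R ρ s * (s / r) ^ (1 + 1) * s
      = (3 * ∫ s in Ioo 0 r, ρ s * s ^ 2) / r ^ 2 - r * ρ r := by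
  have hsub : Icc 0 r ⊆ Icc 0 R := Icc_subset_Icc le_rfl hr.2.le
  have hmass : IntegrableOn (fun s => 3 * (ρ s * s ^ 2)) (Ioo 0 r) :=
    (((hρc.mono hsub).mul (continuousOn_pow 2)).const_mul 3).integrableOn_Icc.mono_set
      Ioo_subset_Icc_self
  have hmoment : IntegrableOn (fun s => ρ' s * s ^ 3) (Ioo 0 r) :=
    ((hρ'c.mono hsub).mul (continuousOn_pow 3)).integrableOn_Icc.mono_set Ioo_subset_Icc_self
  have hparts : ∫ s in Ioo 0 r, (3 * (ρ s * s ^ 2) + ρ' s * s ^ 3) = r ^ 3 * ρ r := by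
    have hderiv : ∀ s ∈ Ioo 0 r,
        HasDerivAt (fun t => t ^ 3 * ρ t) (3 * (ρ s * s ^ 2) + ρ' s * s ^ 3) s := fun s hs => by
      have hcube : HasDerivAt (fun t : ℝ => t ^ 3) (3 * s ^ 2) s := by
        simpa using hasDerivAt_pow 3 s
      exact (hcube.mul (hρd s ⟨hs.1, hs.2.trans hr.2⟩)).congr_deriv (by ring)
    rw [setIntegral_Ioo_eq_sub_of_hasDerivAt (f := fun t => t ^ 3 * ρ t) hr.1.le
      ((continuousOn_pow 3).mul (hρc.mono hsub)) hderiv (hmass.add hmoment)]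
    simp
  have hintegrand : EqOn (fun s => dRho1 R ρ s * (s / r) ^ (1 + 1) * s)
      (fun s => (r ^ 2)⁻¹ * -(ρ' s * s ^ 3)) (Ioo 0 r) := fun s hs => by
    have hs' : s ∈ Ioo 0 R := ⟨hs.1, hs.2.trans hr.2⟩
    simp only [dRho1_eq_neg_deriv hs' (hρd s hs')]
    ring
  rw [integral_add hmass hmoment, integral_const_mul] at hparts
  rw [setIntegral_congr_fun measurableSet_Ioo hintegrand, integral_const_mul, integral_neg,
    show ∫ s in Ioo 0 r, ρ' s * s ^ 3 = r ^ 3 * ρ r - 3 * ∫ s in Ioo 0 r, ρ s * s ^ 2 by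
      linarith]
  field_simp [hr.1.ne']
  ring

lemma dPhi1_eq_neg_gfield (G : ℝ) (hρR : ρ R = 0) (hr : r ∈ Ioo 0 R) :
    dPhi1 R G ρ r = -gfield G ρ r := by
  rw [dPhi1, Hl, integral_Ioi_dRho1_mul hρd hρc hρ'c hr,
    integral_Ioo_dRho1_mul hρd hρc hρ'c hr, hρR, gfield]
  norm_num
  ring

end Potential

theorem stmt15_general (G γ R : ℝ) (hγ : 0 < γ)
    (ρ ρ' P : ℝ → ℝ)
    (hρd : ∀ r ∈ Set.Ioo (0 : ℝ) R, HasDerivAt ρ (ρ' r) r)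
    (hρc : ContinuousOn ρ (Set.Icc 0 R))
    (hρ'c : ContinuousOn ρ' (Set.Icc 0 R))
    (hρpos : ∀ r ∈ Set.Ico (0 : ℝ) R, 0 < ρ r)
    (hρR : ρ R = 0)
    (hPpos : ∀ r ∈ Set.Ioo (0 : ℝ) R, 0 < P r)
    (hPd : ∀ r ∈ Set.Ioo (0 : ℝ) R, HasDerivAt P (-(ρ r * gfield G ρ r)) r) :
    ∀ r ∈ Set.Ioo (0 : ℝ) R,
      dRho1 R ρ r = -ρ' r ∧
      dP1 R γ ρ ρ' P r = -deriv P r ∧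
      dPhi1 R G ρ r = -gfield G ρ r ∧
      (1 / ρ r) * deriv (dP1 R γ ρ ρ' P) r
          - (deriv P r / (ρ r) ^ 2) * dRho1 R ρ r
          + deriv (dPhi1 R G ρ) r = 0 ∧
      (1 / r) * (dP1 R γ ρ ρ' P r / ρ r + dPhi1 R G ρ r) = 0 := by
  have hδρ : ∀ s ∈ Ioo 0 R, dRho1 R ρ s = -ρ' s := fun s hs => dRho1_eq_neg_deriv hs (hρd s hs)
  have hδP : ∀ s ∈ Ioo 0 R, dP1 R γ ρ ρ' P s = ρ s * gfield G ρ s := fun s hs => by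
    rw [dP1_eq_neg_deriv hγ.ne' (hρpos s ⟨hs.1.le, hs.2⟩).ne' (hPpos s hs).ne' (hδρ s hs),
      (hPd s hs).deriv, neg_neg]
  have hδΦ : ∀ s ∈ Ioo 0 R, dPhi1 R G ρ s = -gfield G ρ s :=
    fun s hs => dPhi1_eq_neg_gfield hρd hρc hρ'c G hρR hs
  intro r hr
  have hnhds : Ioo 0 R ∈ 𝓝 r := isOpen_Ioo.mem_nhds hr
  have hρr : ρ r ≠ 0 := (hρpos r ⟨hr.1.le, hr.2⟩).ne'
  have hg := (differentiableAt_gfield (G := G) hρc hr).hasDerivAt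
  have hderiv_δP : deriv (dP1 R γ ρ ρ' P) r = ρ' r * gfield G ρ r + ρ r * deriv (gfield G ρ) r :=
    (Filter.eventuallyEq_of_mem hnhds hδP).deriv_eq.trans ((hρd r hr).mul hg).deriv
  have hderiv_δΦ : deriv (dPhi1 R G ρ) r = -deriv (gfield G ρ) r :=
    (Filter.eventuallyEq_of_mem hnhds hδΦ).deriv_eq.trans hg.neg.deriv
  refine ⟨hδρ r hr, ?_, hδΦ r hr, ?_, ?_⟩
  · rw [hδP r hr, (hPd r hr).deriv, neg_neg]
  · rw [hderiv_δP, hderiv_δΦ, hδρ r hr, (hPd r hr).deriv]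
    field_simp
    ring
  · rw [hδP r hr, hδΦ r hr]
    field_simp
    ring

/-- for `l = 1` and `(V^r, V^h) = (1,1)` one has `δρ̌ = −ρ'`, `δP̌ = −P'`,
`δΦ̌ = −g` on `(0,R)`, and both components of the linearized operator vanish:
the constant pair `(1,1)` lies in the kernel of the degree-1 linearized operator. -/
theorem stmt15 (G γ R : ℝ) (hG : 0 < G) (hγ : 0 < γ) (hR : 0 < R)
    (ρ ρ' P : ℝ → ℝ)
    (hρd : ∀ r ∈ Set.Ioo (0 : ℝ) R, HasDerivAt ρ (ρ' r) r)
    (hρc : ContinuousOn ρ (Set.Icc 0 R))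
    (hρ'c : ContinuousOn ρ' (Set.Icc 0 R))
    (hρpos : ∀ r ∈ Set.Ico (0 : ℝ) R, 0 < ρ r)
    (hρR : ρ R = 0)
    (hPpos : ∀ r ∈ Set.Ioo (0 : ℝ) R, 0 < P r)
    (hPd : ∀ r ∈ Set.Ioo (0 : ℝ) R, HasDerivAt P (-(ρ r * gfield G ρ r)) r) :
    ∀ r ∈ Set.Ioo (0 : ℝ) R,
      dRho1 R ρ r = -ρ' r ∧
      dP1 R γ ρ ρ' P r = -deriv P r ∧
      dPhi1 R G ρ r = -gfield G ρ r ∧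
      (1 / ρ r) * deriv (dP1 R γ ρ ρ' P) r
          - (deriv P r / (ρ r) ^ 2) * dRho1 R ρ r
          + deriv (dPhi1 R G ρ) r = 0 ∧
      (1 / r) * (dP1 R γ ρ ρ' P r / ρ r + dPhi1 R G ρ r) = 0 :=
  stmt15_general G γ R hγ ρ ρ' P hρd hρc hρ'c hρpos hρR hPpos hPd
end

section
/- Let G ≥ 0, R > 0, and let ρ, V : (0,R) → ℝ be such that the product ρV is continuously differentiable on (0,R) and r² ρ(r) V(r) → 0 as r → 0+. Define f(r) := r⁻² (d/dr)(r² ρ(r) V(r)) for 0 < r < R and f(r) := 0 for r ≥ R, and assume f ∈ L²((0,∞), r²dr). Then the function δΦ̌ := 4πG 𝓗₀ f is continuously differentiable on (0,R) and satisfies (d/dr) δΦ̌(r) = −4πG ρ(r) V(r) for all 0 < r < R. -/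
open Set Filter MeasureTheory

/-- `f(r) = r⁻²(r²W)'` on `(0,R)`, `0` beyond, for `W = ρV`. -/
noncomputable def ff (R : ℝ) (W : ℝ → ℝ) (r : ℝ) : ℝ :=
  if 0 < r ∧ r < R then (r ^ 2)⁻¹ * deriv (fun s => s ^ 2 * W s) r else 0

/-! For `x > 0`, `𝓗₀ f (x) = ∫_x^∞ f(s) s ds + x⁻¹ ∫_0^x f(s) s² ds`, so differentiating both
integrals gives `(𝓗₀ f)'(r) = -r⁻² ∫_0^r f(s) s² ds` wherever `f` is continuous. For
`f = r⁻²(r²ρV)'` the fundamental theorem of calculus, together with `r²ρV → 0` at `0⁺`, turns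
`∫_0^r f(s) s² ds` into `r²ρV(r)`. As `f` is supported in `(0, R]`, its square integrability against
`r² dr` makes `s ↦ f(s) s` integrable on `(0, ∞)`, which is what the integrals above require. -/

lemma integrableOn_Ioi_of_integrableOn_sq_of_eq_zero {g : ℝ → ℝ} {R : ℝ}
    (hg : AEStronglyMeasurable g) (hsq : IntegrableOn (fun s => g s ^ 2) (Ioi 0))
    (hzero : ∀ s, R < s → g s = 0) : IntegrableOn g (Ioi 0) := by
  have hmemLp : MemLp g 2 (volume.restrict (Ioc 0 R)) :=
    (memLp_two_iff_integrable_sq hg.restrict).2 (hsq.mono_set Ioc_subset_Ioi_self)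
  have hIoi : IntegrableOn g (Ioi R) :=
    integrableOn_zero.congr_fun (fun s hs => (hzero s hs).symm) measurableSet_Ioi
  refine (IntegrableOn.union (hmemLp.integrable one_le_two) hIoi).mono_set fun s hs => ?_
  rcases le_or_gt s R with h | h
  exacts [Or.inl ⟨hs, h⟩, Or.inr h]

lemma intervalIntegrable_mul_sq_of_integrableOn_Ioi {f : ℝ → ℝ}
    (hf : IntegrableOn (fun s => f s * s) (Ioi 0)) {r : ℝ} (hr : 0 ≤ r) :
    IntervalIntegrable (fun t => f t * t ^ 2) volume 0 r := by
  have h : IntervalIntegrable (fun t => f t * t) volume 0 r :=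
    (intervalIntegrable_iff_integrableOn_Ioc_of_le hr).2 (hf.mono_set Ioc_subset_Ioi_self)
  simpa only [mul_assoc, ← sq] using h.mul_continuousOn (continuousOn_id' _)

lemma Hl_zero_eq {f : ℝ → ℝ} (hf : IntegrableOn (fun s => f s * s) (Ioi 0)) {x : ℝ}
    (hx : 0 < x) :
    Hl 0 f x = (∫ s in Ioi 0, f s * s) - (∫ t in 0..x, f t * t)
      + (∫ t in 0..x, f t * t ^ 2) / x := by
  have hsplit : ∫ s in Ioi 0, f s * s = (∫ t in 0..x, f t * t) + ∫ s in Ioi x, f s * s := by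
    rw [intervalIntegral.integral_of_le hx.le, ← Ioc_union_Ioi_eq_Ioi hx.le,
      setIntegral_union Ioc_disjoint_Ioi_same measurableSet_Ioi
        (hf.mono_set Ioc_subset_Ioi_self) (hf.mono_set (Ioi_subset_Ioi hx.le))]
  have hinner : ∫ s in Ioo 0 x, f s * (s / x) ^ (0 + 1) * s = (∫ t in 0..x, f t * t ^ 2) / x := by
    rw [intervalIntegral.integral_of_le hx.le, ← integral_Ioc_eq_integral_Ioo,
      ← integral_div]
    congr 1 with s
    ring
  simp only [Hl, hinner, pow_zero, mul_one, CharP.cast_eq_zero, mul_zero, zero_add, inv_one,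
    one_mul, hsplit]
  ring

lemma hasDerivAt_Hl_zero {f : ℝ → ℝ} (hfm : Measurable f)
    (hf : IntegrableOn (fun s => f s * s) (Ioi 0)) {r : ℝ} (hr : 0 < r)
    (hfc : ContinuousAt f r) :
    HasDerivAt (Hl 0 f) (-(∫ t in 0..r, f t * t ^ 2) / r ^ 2) r := by
  have hI : IntervalIntegrable (fun t => f t * t) volume 0 r :=
    (intervalIntegrable_iff_integrableOn_Ioc_of_le hr.le).2 (hf.mono_set Ioc_subset_Ioi_self)
  have hd1 : HasDerivAt (fun x => ∫ t in 0..x, f t * t) (f r * r) r :=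
    intervalIntegral.integral_hasDerivAt_right hI
      (hfm.mul measurable_id).stronglyMeasurable.stronglyMeasurableAtFilter
      (hfc.mul continuousAt_id)
  have hd2 : HasDerivAt (fun x => ∫ t in 0..x, f t * t ^ 2) (f r * r ^ 2) r :=
    intervalIntegral.integral_hasDerivAt_right
      (intervalIntegrable_mul_sq_of_integrableOn_Ioi hf hr.le)
      (hfm.mul (measurable_id.pow_const 2)).stronglyMeasurable.stronglyMeasurableAtFilter
      (hfc.mul (continuousAt_id.pow 2))
  have hrep : (fun x => (∫ s in Ioi 0, f s * s) - (∫ t in 0..x, f t * t)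
      + (∫ t in 0..x, f t * t ^ 2) / x) =ᶠ[nhds r] Hl 0 f :=
    eventually_gt_nhds hr |>.mono fun x hx => (Hl_zero_eq hf hx).symm
  refine (((hasDerivAt_const r _).sub hd1).add (hd2.div (hasDerivAt_id' r) hr.ne'))
    |>.congr_of_eventuallyEq hrep.symm |>.congr_deriv ?_
  field_simp
  ring

section ff

variable {R : ℝ} {W : ℝ → ℝ}

lemma measurable_ff (R : ℝ) (W : ℝ → ℝ) : Measurable (ff R W) :=
  Measurable.ite measurableSet_Ioo ((measurable_id.pow_const 2).inv.mul (measurable_deriv _))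
    measurable_const

lemma ff_eq_zero_of_le {s : ℝ} (hs : R ≤ s) : ff R W s = 0 :=
  if_neg fun h => hs.not_gt h.2

lemma hasDerivAt_sq_mul {x : ℝ} (hW : DifferentiableAt ℝ W x) :
    HasDerivAt (fun s => s ^ 2 * W s) (2 * x * W x + x ^ 2 * deriv W x) x := by
  simpa using (hasDerivAt_pow 2 x).fun_mul hW.hasDerivAt

lemma ff_eq {x : ℝ} (hx : x ∈ Ioo 0 R) (hW : DifferentiableAt ℝ W x) :
    ff R W x = (x ^ 2)⁻¹ * (2 * x * W x + x ^ 2 * deriv W x) := by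
  rw [ff, if_pos ⟨hx.1, hx.2⟩, (hasDerivAt_sq_mul hW).deriv]

lemma hasDerivAt_sq_mul_ff {x : ℝ} (hx : x ∈ Ioo 0 R) (hW : DifferentiableAt ℝ W x) :
    HasDerivAt (fun s => s ^ 2 * W s) (ff R W x * x ^ 2) x := by
  convert hasDerivAt_sq_mul hW using 1
  rw [ff_eq hx hW]
  field_simp [hx.1.ne']

lemma continuousOn_ff (hW : ∀ x ∈ Ioo 0 R, DifferentiableAt ℝ W x)
    (hWc : ContinuousOn (deriv W) (Ioo 0 R)) : ContinuousOn (ff R W) (Ioo 0 R) := by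
  have hWcont : ContinuousOn W (Ioo 0 R) := fun x hx => (hW x hx).continuousAt.continuousWithinAt
  refine ContinuousOn.congr ?_ fun x hx => ff_eq hx (hW x hx)
  refine ((continuousOn_pow 2).inv₀ fun x hx => pow_ne_zero 2 hx.1.ne').mul ?_
  fun_prop

lemma integral_ff_mul_sq (hW : ∀ x ∈ Ioo 0 R, DifferentiableAt ℝ W x)
    (h0 : Tendsto (fun r => r ^ 2 * W r) (nhdsWithin 0 (Ioi 0)) (nhds 0))
    (hint : IntegrableOn (fun s => ff R W s * s) (Ioi 0)) {r : ℝ} (hr : r ∈ Ioo 0 R) :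
    ∫ t in 0..r, ff R W t * t ^ 2 = r ^ 2 * W r := by
  have hderiv : ∀ x ∈ Ioo 0 r, HasDerivAt (fun s => s ^ 2 * W s) (ff R W x * x ^ 2) x :=
    fun x hx => have hxR : x ∈ Ioo 0 R := ⟨hx.1, hx.2.trans hr.2⟩
      hasDerivAt_sq_mul_ff hxR (hW x hxR)
  have hr_cont : ContinuousAt (fun s => s ^ 2 * W s) r :=
    (hasDerivAt_sq_mul (hW r hr)).continuousAt
  simpa using intervalIntegral.integral_eq_sub_of_hasDerivAt_of_tendsto hr.1 hderiv
    (intervalIntegrable_mul_sq_of_integrableOn_Ioi hint hr.1.le) h0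
    (hr_cont.tendsto.mono_left nhdsWithin_le_nhds)

lemma hasDerivAt_Hl_zero_ff (hW : ∀ x ∈ Ioo 0 R, DifferentiableAt ℝ W x)
    (hWc : ContinuousOn (deriv W) (Ioo 0 R))
    (h0 : Tendsto (fun r => r ^ 2 * W r) (nhdsWithin 0 (Ioi 0)) (nhds 0))
    (hint : IntegrableOn (fun s => ff R W s * s) (Ioi 0)) {r : ℝ} (hr : r ∈ Ioo 0 R) :
    HasDerivAt (Hl 0 (ff R W)) (-W r) r := by
  have h := hasDerivAt_Hl_zero (measurable_ff R W) hint hr.1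
    ((continuousOn_ff hW hWc).continuousAt (isOpen_Ioo.mem_nhds hr))
  rwa [integral_ff_mul_sq hW h0 hint hr, neg_div, mul_div_cancel_left₀ _ (pow_ne_zero 2 hr.1.ne')]
    at h

end ff

theorem stmt18_general (G R : ℝ) (ρ V : ℝ → ℝ)
    (hW : ∀ r ∈ Set.Ioo (0 : ℝ) R, DifferentiableAt ℝ (fun s => ρ s * V s) r)
    (hWc : ContinuousOn (deriv (fun s => ρ s * V s)) (Set.Ioo 0 R))
    (h0 : Filter.Tendsto (fun r => r ^ 2 * (ρ r * V r))
      (nhdsWithin 0 (Set.Ioi 0)) (nhds 0))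
    (hf2 : MeasureTheory.IntegrableOn
      (fun r => ff R (fun s => ρ s * V s) r ^ 2 * r ^ 2) (Set.Ioi 0)) :
    (∀ r ∈ Set.Ioo (0 : ℝ) R,
      HasDerivAt (fun x => 4 * Real.pi * G * Hl 0 (ff R (fun s => ρ s * V s)) x)
        (-(4 * Real.pi * G * (ρ r * V r))) r) ∧
    ContinuousOn (deriv (fun x => 4 * Real.pi * G * Hl 0 (ff R (fun s => ρ s * V s)) x))
      (Set.Ioo 0 R) := by
  have hint : IntegrableOn (fun s => ff R (fun s => ρ s * V s) s * s) (Ioi 0) :=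
    integrableOn_Ioi_of_integrableOn_sq_of_eq_zero
      ((measurable_ff R _).mul measurable_id).aestronglyMeasurable
      (by simpa only [mul_pow] using hf2) fun s hs => by rw [ff_eq_zero_of_le hs.le, zero_mul]
  have hderiv : ∀ r ∈ Ioo 0 R,
      HasDerivAt (fun x => 4 * Real.pi * G * Hl 0 (ff R (fun s => ρ s * V s)) x)
        (-(4 * Real.pi * G * (ρ r * V r))) r := fun r hr => by
    simpa using (hasDerivAt_Hl_zero_ff hW hWc h0 hint hr).const_mul (4 * Real.pi * G)
  refine ⟨hderiv, ContinuousOn.congr ?_ fun r hr => (hderiv r hr).deriv⟩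
  exact (continuousOn_const.mul fun r hr => (hW r hr).continuousAt.continuousWithinAt).neg

/-- for the radial (`l = 0`) perturbation, `δΦ̌ = 4πG𝓗₀f` with
`f = r⁻²(r²ρV)'` is continuously differentiable on `(0,R)` and
`(d/dr)δΦ̌ = −4πGρV` there. -/
theorem stmt18 (G R : ℝ) (hG : 0 ≤ G) (hR : 0 < R) (ρ V : ℝ → ℝ)
    (hW : ∀ r ∈ Set.Ioo (0 : ℝ) R, DifferentiableAt ℝ (fun s => ρ s * V s) r)
    (hWc : ContinuousOn (deriv (fun s => ρ s * V s)) (Set.Ioo 0 R))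
    (h0 : Filter.Tendsto (fun r => r ^ 2 * (ρ r * V r))
      (nhdsWithin 0 (Set.Ioi 0)) (nhds 0))
    (hf2 : MeasureTheory.IntegrableOn
      (fun r => ff R (fun s => ρ s * V s) r ^ 2 * r ^ 2) (Set.Ioi 0)) :
    (∀ r ∈ Set.Ioo (0 : ℝ) R,
      HasDerivAt (fun x => 4 * Real.pi * G * Hl 0 (ff R (fun s => ρ s * V s)) x)
        (-(4 * Real.pi * G * (ρ r * V r))) r) ∧
    ContinuousOn (deriv (fun x => 4 * Real.pi * G * Hl 0 (ff R (fun s => ρ s * V s)) x))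
      (Set.Ioo 0 R) :=
  stmt18_general G R ρ V hW hWc h0 hf2
end
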